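/- arXiv:2505.04218 — 2 statements merged into one kernel-verified Lean document; each statement's English description precedes it below -/
import Mathlib

section
/- Let P be a Markov kernel on a measurable space (X, 𝔛) and V : X → [1, ∞) a measurable function satisfying the drift condition PV(x) ≤ λV(x) + b·𝟙_D(x) for all x, with λ ∈ (0,1), b ≥ 0, and D ∈ 𝔛. Then for β = 1/λ and every x ∈ X, E_x[β^{σ_D}] ≤ V(x) + bβ, where σ_D = inf{n ≥ 1 : X_n ∈ D} is the first return time to D. -/
/-!
Let `T n` be the event that the chain avoids `D` at times `1, …, n`, so that `σ_D ≥ n + 1` exactly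
on `T n`. Off `D` the drift condition reads `PV ≤ λ V`, so by the Markov property the quantity
`E[β^{σ_D} ; σ_D ≤ N] + β^{N+1} E[V(X_{N+1}) ; T N]` is nonincreasing in `N`: the mass
`β^{N+1} E[V(X_{N+1}) ; T N \ T (N+1)]` that leaves the second term pays for `β^{σ_D}` on
`{σ_D = N + 1}` because `V ≥ 1`, and what stays shrinks by the factor `βλ = 1`. Its value at `N = 0`
is `β E[V(X_1)] = β PV(x) ≤ V(x) + bβ`, and it dominates `E[β^{min(σ_D, N+1)}]`; monotone convergence
concludes.
-/

open MeasureTheory ProbabilityTheory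
open scoped ENNReal

/-- `a ^ n` for an extended natural exponent (equals `a^n` for finite `n` and, for `a ≥ 1`,
`sup_k a^k` when `n = ∞`). -/
noncomputable def epow (a : ℝ≥0∞) (n : ℕ∞) : ℝ≥0∞ := ⨆ (k : ℕ) (_ : (k : ℕ∞) ≤ n), a ^ k

/-- First return time to `D` of a trajectory `ω`, as an extended natural number. -/
noncomputable def returnTime {S : Type*} (D : Set S) (ω : ℕ → S) : ℕ∞ :=
  ⨅ (n : ℕ) (_ : 1 ≤ n ∧ ω n ∈ D), (n : ℕ∞)

open Set

lemma ENat.measurable_of_measurableSet_setOf_le {α : Type*} [MeasurableSpace α] {f : α → ℕ∞}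
    (h : ∀ n : ℕ, MeasurableSet {a | (n : ℕ∞) ≤ f a}) : Measurable f := by
  refine measurable_to_countable' fun x => ?_
  induction x using ENat.recTopCoe with
  | top =>
    have : f ⁻¹' {⊤} = ⋂ n : ℕ, {a | (n : ℕ∞) ≤ f a} := by
      ext a; simp [ENat.eq_top_iff_forall_ge]
    rw [this]
    exact .iInter h
  | coe n =>
    have : f ⁻¹' {(n : ℕ∞)} = {a | (n : ℕ∞) ≤ f a} \ {a | ((n + 1 : ℕ) : ℕ∞) ≤ f a} := by
      ext a
      simp only [mem_preimage, mem_singleton_iff, mem_sdiff, mem_ofPred_eq, not_le, Nat.cast_add,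
        Nat.cast_one, ENat.lt_add_one_iff (ENat.natCast_ne_top n)]
      exact ⟨fun h => ⟨h.ge, h.le⟩, fun h => le_antisymm h.2 h.1⟩
    rw [this]
    exact (h n).diff (h (n + 1))

lemma lintegral_const_le_mul_lintegral {α : Type*} [MeasurableSpace α] {μ : Measure α}
    {g : α → ℝ≥0∞} (hg : Measurable g) (hg1 : ∀ a, 1 ≤ g a) (c : ℝ≥0∞) :
    ∫⁻ _, c ∂μ ≤ c * ∫⁻ a, g a ∂μ := by
  rw [← lintegral_const_mul c hg]
  exact lintegral_mono fun a => le_mul_of_one_le_right' (hg1 a)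

lemma lintegral_le_of_le_on_measure_eq_one {α : Type*} [MeasurableSpace α] {μ : Measure α}
    [IsProbabilityMeasure μ] {g : α → ℝ≥0∞} (hg : Measurable g) {s : Set α} (hs : μ s = 1)
    {c : ℝ≥0∞} (hle : ∀ a ∈ s, g a ≤ c) : ∫⁻ a, g a ∂μ ≤ c := by
  have hae : ∀ᵐ a ∂μ, g a ≤ c := by
    rw [ae_iff_measure_eq (measurableSet_le hg measurable_const).nullMeasurableSet]
    exact le_antisymm (measure_mono (subset_univ _))
      (measure_univ (μ := μ) ▸ hs ▸ measure_mono hle)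
  calc ∫⁻ a, g a ∂μ ≤ ∫⁻ _, c ∂μ := lintegral_mono_ae hae
    _ = c := by simp

lemma epow_natCast {a : ℝ≥0∞} (ha : 1 ≤ a) (n : ℕ) : epow a n = a ^ n :=
  le_antisymm (iSup₂_le fun _ hk => pow_le_pow_right' ha (by exact_mod_cast hk))
    (le_iSup₂_of_le n le_rfl le_rfl)

lemma epow_mono (a : ℝ≥0∞) : Monotone (epow a) :=
  fun _ _ h => biSup_mono fun _ hk => hk.trans h

lemma epow_eq_iSup_min (a : ℝ≥0∞) (n : ℕ∞) : epow a n = ⨆ N : ℕ, epow a (min n N) :=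
  le_antisymm (iSup₂_le fun k hk => le_iSup_of_le k (le_iSup₂_of_le k (le_min hk le_rfl) le_rfl))
    (iSup_le fun _ => epow_mono a (min_le_left _ _))

section returnTime

variable {S : Type*} {D : Set S}

def avoidUntil (D : Set S) (n : ℕ) : Set (ℕ → S) := {ω | ∀ k ∈ Finset.Icc 1 n, ω k ∉ D}

lemma avoidUntil_zero : avoidUntil D 0 = univ := by
  ext ω
  simp only [avoidUntil, Finset.mem_Icc, mem_ofPred_eq, mem_univ, iff_true]
  omega

lemma avoidUntil_succ_subset (n : ℕ) : avoidUntil D (n + 1) ⊆ avoidUntil D n :=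
  fun _ hω k hk => hω k (Finset.Icc_subset_Icc_right n.le_succ hk)

lemma natCast_add_one_le_returnTime_iff {ω : ℕ → S} {n : ℕ} :
    ((n + 1 : ℕ) : ℕ∞) ≤ returnTime D ω ↔ ω ∈ avoidUntil D n := by
  simp only [returnTime, le_iInf_iff, avoidUntil, mem_ofPred_eq, Finset.mem_Icc, Nat.cast_le]
  constructor
  · intro h k hk hkD
    have := h k ⟨hk.1, hkD⟩
    omega
  · intro h m hm
    by_contra hlt
    exact h m ⟨hm.1, by omega⟩ hm.2

lemma returnTime_lt_of_notMem_avoidUntil {ω : ℕ → S} {n : ℕ} (h : ω ∉ avoidUntil D n) :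
    returnTime D ω < ((n + 1 : ℕ) : ℕ∞) :=
  not_le.1 (mt natCast_add_one_le_returnTime_iff.1 h)

lemma returnTime_eq_of_mem_sdiff {ω : ℕ → S} {n : ℕ}
    (h : ω ∈ avoidUntil D n \ avoidUntil D (n + 1)) : returnTime D ω = ((n + 1 : ℕ) : ℕ∞) := by
  have hlt := returnTime_lt_of_notMem_avoidUntil h.2
  rw [Nat.cast_add, Nat.cast_one, ENat.lt_add_one_iff (ENat.natCast_ne_top _)] at hlt
  exact le_antisymm hlt (natCast_add_one_le_returnTime_iff.2 h.1)

variable [MeasurableSpace S]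

lemma measurableSet_avoidUntil (hD : MeasurableSet D) (n : ℕ) :
    MeasurableSet (avoidUntil D n) := by
  have : avoidUntil D n = ⋂ k ∈ Finset.Icc 1 n, (fun ω : ℕ → S => ω k) ⁻¹' Dᶜ := by
    ext ω; simp [avoidUntil]
  rw [this]
  exact Finset.measurableSet_biInter _ fun k _ => measurable_pi_apply k hD.compl

lemma measurable_returnTime (hD : MeasurableSet D) : Measurable (returnTime D) := by
  refine ENat.measurable_of_measurableSet_setOf_le fun n => ?_
  cases n with
  | zero => simp
  | succ n =>
    simp_rw [natCast_add_one_le_returnTime_iff]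
    exact measurableSet_avoidUntil hD n

end returnTime

section Markov

variable {S : Type*} [MeasurableSpace S] {P : Kernel S S} {μ : Measure (ℕ → S)} {D : Set S}
  {V : S → ℝ≥0∞}

def HasMarkovProperty (P : Kernel S S) (μ : Measure (ℕ → S)) : Prop :=
  ∀ (n : ℕ) (f : S → ℝ≥0∞), Measurable f →
    ∀ B : Set (Fin (n + 1) → S), MeasurableSet B →
      ∫⁻ ω in {ω : ℕ → S | (fun i : Fin (n + 1) => ω i) ∈ B}, f (ω (n + 1)) ∂μ =
        ∫⁻ ω in {ω : ℕ → S | (fun i : Fin (n + 1) => ω i) ∈ B}, ∫⁻ y, f y ∂(P (ω n)) ∂μ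

lemma HasMarkovProperty.setLIntegral_avoidUntil (hμ : HasMarkovProperty P μ)
    (hD : MeasurableSet D) {f : S → ℝ≥0∞} (hf : Measurable f) (n : ℕ) :
    ∫⁻ ω in avoidUntil D n, f (ω (n + 1)) ∂μ =
      ∫⁻ ω in avoidUntil D n, ∫⁻ y, f y ∂(P (ω n)) ∂μ := by
  let B : Set (Fin (n + 1) → S) := ⋂ i : Fin (n + 1), ⋂ (_ : (i : ℕ) ≠ 0), (fun v => v i) ⁻¹' Dᶜ
  have hB : MeasurableSet B :=
    .iInter fun i => .iInter fun _ => measurable_pi_apply i hD.compl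
  have hT : avoidUntil D n = {ω : ℕ → S | (fun i : Fin (n + 1) => ω i) ∈ B} := by
    ext ω
    simp only [avoidUntil, B, Finset.mem_Icc, mem_ofPred_eq, mem_iInter, mem_preimage,
      mem_compl_iff]
    exact ⟨fun h i hi => h i ⟨Nat.one_le_iff_ne_zero.2 hi, Nat.lt_succ_iff.1 i.isLt⟩,
      fun h k hk => h ⟨k, Nat.lt_succ_iff.2 hk.2⟩ (Nat.one_le_iff_ne_zero.1 hk.1)⟩
  rw [hT]
  exact hμ n f hf B hB

lemma HasMarkovProperty.lintegral_comp_one (hμ : HasMarkovProperty P μ) {f : S → ℝ≥0∞}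
    (hf : Measurable f) : ∫⁻ ω, f (ω 1) ∂μ = ∫⁻ ω, ∫⁻ y, f y ∂(P (ω 0)) ∂μ := by
  simpa [avoidUntil_zero] using hμ.setLIntegral_avoidUntil (D := ∅) MeasurableSet.empty hf 0

lemma HasMarkovProperty.setLIntegral_avoidUntil_succ_le (hμ : HasMarkovProperty P μ)
    (hD : MeasurableSet D) (hV : Measurable V) {r : ℝ≥0∞}
    (hdrift : ∀ y ∉ D, ∫⁻ z, V z ∂(P y) ≤ r * V y) (n : ℕ) :
    ∫⁻ ω in avoidUntil D (n + 1), V (ω (n + 2)) ∂μ ≤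
      r * ∫⁻ ω in avoidUntil D (n + 1), V (ω (n + 1)) ∂μ := by
  rw [hμ.setLIntegral_avoidUntil hD hV (n + 1),
    ← lintegral_const_mul r (f := fun ω : ℕ → S => V (ω (n + 1))) (by fun_prop)]
  refine setLIntegral_mono (by fun_prop) fun ω hω => hdrift _ (hω (n + 1) ?_)
  simp

noncomputable def returnLyapunov (μ : Measure (ℕ → S)) (D : Set S) (V : S → ℝ≥0∞) (β : ℝ≥0∞)
    (N : ℕ) : ℝ≥0∞ :=
  ∫⁻ ω in (avoidUntil D N)ᶜ, epow β (returnTime D ω) ∂μ +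
    β ^ (N + 1) * ∫⁻ ω in avoidUntil D N, V (ω (N + 1)) ∂μ

lemma returnLyapunov_zero (β : ℝ≥0∞) :
    returnLyapunov μ D V β 0 = β * ∫⁻ ω, V (ω 1) ∂μ := by
  simp [returnLyapunov, avoidUntil_zero]

lemma lintegral_epow_min_returnTime_le (hD : MeasurableSet D) (hV : Measurable V)
    (hV1 : ∀ s, 1 ≤ V s) {β : ℝ≥0∞} (hβ : 1 ≤ β) (N : ℕ) :
    ∫⁻ ω, epow β (min (returnTime D ω) ((N + 1 : ℕ) : ℕ∞)) ∂μ ≤ returnLyapunov μ D V β N := by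
  have hT := measurableSet_avoidUntil hD N
  rw [← lintegral_add_compl _ hT, add_comm, returnLyapunov]
  gcongr ?_ + ?_
  · refine (setLIntegral_congr_fun hT.compl fun ω hω => ?_).le
    rw [min_eq_left (returnTime_lt_of_notMem_avoidUntil hω).le]
  · calc ∫⁻ ω in avoidUntil D N, epow β (min (returnTime D ω) ((N + 1 : ℕ) : ℕ∞)) ∂μ
        = ∫⁻ _ in avoidUntil D N, β ^ (N + 1) ∂μ := by
          refine setLIntegral_congr_fun hT fun ω hω => ?_
          rw [min_eq_right (natCast_add_one_le_returnTime_iff.2 hω), epow_natCast hβ]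
      _ ≤ β ^ (N + 1) * ∫⁻ ω in avoidUntil D N, V (ω (N + 1)) ∂μ :=
          lintegral_const_le_mul_lintegral (by fun_prop) (fun ω => hV1 _) _

lemma HasMarkovProperty.returnLyapunov_succ_le (hμ : HasMarkovProperty P μ)
    (hD : MeasurableSet D) (hV : Measurable V) (hV1 : ∀ s, 1 ≤ V s) {r β : ℝ≥0∞}
    (hdrift : ∀ y ∉ D, ∫⁻ z, V z ∂(P y) ≤ r * V y) (hβ : 1 ≤ β) (hβr : β * r ≤ 1) (N : ℕ) :
    returnLyapunov μ D V β (N + 1) ≤ returnLyapunov μ D V β N := by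
  set T := avoidUntil D
  have hT := measurableSet_avoidUntil hD
  have hsub := avoidUntil_succ_subset (D := D) N
  have hcompl : (T (N + 1))ᶜ = (T N)ᶜ ∪ T N \ T (N + 1) := by
    ext ω
    have := @hsub ω
    simp only [mem_union, mem_compl_iff, mem_sdiff]
    tauto
  have hexit : ∫⁻ ω in T N \ T (N + 1), epow β (returnTime D ω) ∂μ ≤
      β ^ (N + 1) * ∫⁻ ω in T N \ T (N + 1), V (ω (N + 1)) ∂μ := by
    rw [setLIntegral_congr_fun ((hT N).diff (hT (N + 1))) fun ω hω => by
      rw [returnTime_eq_of_mem_sdiff hω, epow_natCast hβ]]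
    exact lintegral_const_le_mul_lintegral (by fun_prop) (fun ω => hV1 _) _
  have hstay : β ^ (N + 1 + 1) * ∫⁻ ω in T (N + 1), V (ω (N + 1 + 1)) ∂μ ≤
      β ^ (N + 1) * ∫⁻ ω in T (N + 1), V (ω (N + 1)) ∂μ :=
    calc β ^ (N + 1 + 1) * ∫⁻ ω in T (N + 1), V (ω (N + 1 + 1)) ∂μ
        ≤ β ^ (N + 1) * β * (r * ∫⁻ ω in T (N + 1), V (ω (N + 1)) ∂μ) := by
          rw [pow_succ]
          gcongr
          exact hμ.setLIntegral_avoidUntil_succ_le hD hV hdrift N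
      _ = β ^ (N + 1) * (β * r) * ∫⁻ ω in T (N + 1), V (ω (N + 1)) ∂μ := by ring
      _ ≤ β ^ (N + 1) * ∫⁻ ω in T (N + 1), V (ω (N + 1)) ∂μ := by
          gcongr
          exact mul_le_of_le_one_right' hβr
  calc returnLyapunov μ D V β (N + 1)
      = ∫⁻ ω in (T N)ᶜ, epow β (returnTime D ω) ∂μ +
          ∫⁻ ω in T N \ T (N + 1), epow β (returnTime D ω) ∂μ +
          β ^ (N + 1 + 1) * ∫⁻ ω in T (N + 1), V (ω (N + 1 + 1)) ∂μ := by
        rw [returnLyapunov, hcompl, lintegral_union ((hT N).diff (hT (N + 1)))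
          (disjoint_compl_left.mono_right sdiff_subset)]
    _ ≤ ∫⁻ ω in (T N)ᶜ, epow β (returnTime D ω) ∂μ +
          β ^ (N + 1) * ∫⁻ ω in T N \ T (N + 1), V (ω (N + 1)) ∂μ +
          β ^ (N + 1) * ∫⁻ ω in T (N + 1), V (ω (N + 1)) ∂μ := by
        gcongr
    _ = returnLyapunov μ D V β N := by
        rw [add_assoc, ← mul_add, ← lintegral_union (hT (N + 1)) disjoint_sdiff_left,
          sdiff_union_of_subset hsub, returnLyapunov]

theorem HasMarkovProperty.lintegral_epow_returnTime_le (hμ : HasMarkovProperty P μ)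
    (hD : MeasurableSet D) (hV : Measurable V) (hV1 : ∀ s, 1 ≤ V s) {r β : ℝ≥0∞}
    (hdrift : ∀ y ∉ D, ∫⁻ z, V z ∂(P y) ≤ r * V y) (hβ : 1 ≤ β) (hβr : β * r ≤ 1) :
    ∫⁻ ω, epow β (returnTime D ω) ∂μ ≤ β * ∫⁻ ω, V (ω 1) ∂μ := by
  have hanti : Antitone (returnLyapunov μ D V β) :=
    antitone_nat_of_succ_le (hμ.returnLyapunov_succ_le hD hV hV1 hdrift hβ hβr)
  calc ∫⁻ ω, epow β (returnTime D ω) ∂μ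
      = ∫⁻ ω, ⨆ N : ℕ, epow β (min (returnTime D ω) N) ∂μ := by
        simp_rw [← epow_eq_iSup_min]
    _ = ⨆ N : ℕ, ∫⁻ ω, epow β (min (returnTime D ω) N) ∂μ :=
        lintegral_iSup (fun N => (Measurable.of_discrete (f := fun n : ℕ∞ => epow β (min n N))).comp
          (measurable_returnTime hD))
          fun _ _ hMN ω => epow_mono β (min_le_min_left _ (by exact_mod_cast hMN))
    _ ≤ β * ∫⁻ ω, V (ω 1) ∂μ := by
        refine iSup_le fun N => ?_
        calc ∫⁻ ω, epow β (min (returnTime D ω) N) ∂μ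
            ≤ ∫⁻ ω, epow β (min (returnTime D ω) ((N + 1 : ℕ) : ℕ∞)) ∂μ :=
              lintegral_mono fun ω =>
                epow_mono β (min_le_min_left _ (by exact_mod_cast N.le_succ))
          _ ≤ returnLyapunov μ D V β N := lintegral_epow_min_returnTime_le hD hV hV1 hβ N
          _ ≤ returnLyapunov μ D V β 0 := hanti N.zero_le
          _ = β * ∫⁻ ω, V (ω 1) ∂μ := returnLyapunov_zero β

end Markov

theorem stmt_8_general {S : Type*} [MeasurableSpace S] (P : Kernel S S)
    (Pr : S → Measure (ℕ → S)) (hprob : ∀ x, IsProbabilityMeasure (Pr x))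
    (hstart : ∀ x, (Pr x) {ω | ω 0 = x} = 1)
    (hMarkov : ∀ (x : S) (n : ℕ) (f : S → ℝ≥0∞), Measurable f →
      ∀ B : Set (Fin (n + 1) → S), MeasurableSet B →
        ∫⁻ ω in {ω : ℕ → S | (fun i : Fin (n + 1) => ω i) ∈ B}, f (ω (n + 1)) ∂(Pr x) =
          ∫⁻ ω in {ω : ℕ → S | (fun i : Fin (n + 1) => ω i) ∈ B},
            ∫⁻ y, f y ∂(P (ω n)) ∂(Pr x))
    (V : S → ℝ≥0∞) (hV : Measurable V) (hV1 : ∀ s, 1 ≤ V s)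
    (lam b : ℝ) (hlam : lam ∈ Set.Ioo (0 : ℝ) 1)
    (D : Set S) (hD : MeasurableSet D)
    (hdrift : ∀ x, ∫⁻ y, V y ∂(P x) ≤
      ENNReal.ofReal lam * V x + ENNReal.ofReal b * D.indicator (1 : S → ℝ≥0∞) x) :
    ∀ x, ∫⁻ ω, epow (ENNReal.ofReal (1 / lam)) (returnTime D ω) ∂(Pr x) ≤
      V x + ENNReal.ofReal b * ENNReal.ofReal (1 / lam) := by
  intro x
  have := hprob x
  have hμ : HasMarkovProperty P (Pr x) := hMarkov x
  have hβr : ENNReal.ofReal (1 / lam) * ENNReal.ofReal lam = 1 := by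
    rw [← ENNReal.ofReal_mul (by simpa using hlam.1.le), one_div_mul_cancel hlam.1.ne',
      ENNReal.ofReal_one]
  have hβ : 1 ≤ ENNReal.ofReal (1 / lam) := by
    rw [ENNReal.one_le_ofReal, le_one_div zero_lt_one hlam.1, div_one]
    exact hlam.2.le
  have hdrift_off : ∀ y ∉ D, ∫⁻ z, V z ∂(P y) ≤ ENNReal.ofReal lam * V y := fun y hy => by
    simpa [indicator_of_notMem hy] using hdrift y
  have hstep : ∫⁻ ω, V (ω 1) ∂(Pr x) ≤ ENNReal.ofReal lam * V x + ENNReal.ofReal b := by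
    rw [hμ.lintegral_comp_one hV]
    have hPV : Measurable fun ω : ℕ → S => ∫⁻ y, V y ∂(P (ω 0)) :=
      hV.lintegral_kernel.comp (measurable_pi_apply 0)
    refine lintegral_le_of_le_on_measure_eq_one hPV (hstart x) fun ω hω => ?_
    rw [show ω 0 = x from hω]
    refine (hdrift x).trans (add_le_add_right (mul_le_of_le_one_right' ?_) _)
    exact indicator_le_self' (fun _ _ => zero_le_one) x
  calc ∫⁻ ω, epow (ENNReal.ofReal (1 / lam)) (returnTime D ω) ∂(Pr x)
      ≤ ENNReal.ofReal (1 / lam) * ∫⁻ ω, V (ω 1) ∂(Pr x) :=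
        hμ.lintegral_epow_returnTime_le hD hV hV1 hdrift_off hβ hβr.le
    _ ≤ ENNReal.ofReal (1 / lam) * (ENNReal.ofReal lam * V x + ENNReal.ofReal b) := by gcongr
    _ = V x + ENNReal.ofReal b * ENNReal.ofReal (1 / lam) := by
        rw [mul_add, ← mul_assoc, hβr, one_mul, mul_comm]

/-- If a Markov chain with kernel `P` satisfies the geometric drift condition
`PV ≤ λV + b·𝟙_D` with `V ≥ 1`, `λ ∈ (0,1)`, `b ≥ 0`, then with `β = 1/λ`,
`E_x[β^{σ_D}] ≤ V(x) + bβ` for every starting point `x`. -/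
theorem stmt_8 {S : Type*} [MeasurableSpace S] (P : Kernel S S) [IsMarkovKernel P]
    (Pr : S → Measure (ℕ → S)) (hprob : ∀ x, IsProbabilityMeasure (Pr x))
    (hstart : ∀ x, (Pr x) {ω | ω 0 = x} = 1)
    (hMarkov : ∀ (x : S) (n : ℕ) (f : S → ℝ≥0∞), Measurable f →
      ∀ B : Set (Fin (n + 1) → S), MeasurableSet B →
        ∫⁻ ω in {ω : ℕ → S | (fun i : Fin (n + 1) => ω i) ∈ B}, f (ω (n + 1)) ∂(Pr x) =
          ∫⁻ ω in {ω : ℕ → S | (fun i : Fin (n + 1) => ω i) ∈ B},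
            ∫⁻ y, f y ∂(P (ω n)) ∂(Pr x))
    (V : S → ℝ≥0∞) (hV : Measurable V) (hV1 : ∀ s, 1 ≤ V s)
    (lam b : ℝ) (hlam : lam ∈ Set.Ioo (0 : ℝ) 1) (hb : 0 ≤ b)
    (D : Set S) (hD : MeasurableSet D)
    (hdrift : ∀ x, ∫⁻ y, V y ∂(P x) ≤
      ENNReal.ofReal lam * V x + ENNReal.ofReal b * D.indicator (1 : S → ℝ≥0∞) x) :
    ∀ x, ∫⁻ ω, epow (ENNReal.ofReal (1 / lam)) (returnTime D ω) ∂(Pr x) ≤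
      V x + ENNReal.ofReal b * ENNReal.ofReal (1 / lam) :=
  stmt_8_general P Pr hprob hstart hMarkov V hV hV1 lam b hlam D hD hdrift
end

section
/- Let P be a Markov kernel on (X, 𝔛) with an (1, εν)-small set C where ν is a probability measure with ν(C) = 1 and ε ∈ (0,1), and let P̌ be the split kernel on X̌ = X × {0,1} defined via the residual kernel R and Bernoulli measure b_ε = (1−ε)δ₀ + εδ₁. Then if λ is a P-invariant nonnegative measure on X, the product measure λ ⊗ b_ε is P̌-invariant. -/
/-! Averaging the first marginal `Q(x,d;·)` of the split kernel over `d ∼ b_ε` gives back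
`P(x,·)`: on `C` this is `(1-ε)R(x,·) + εν = P(x,·)`, and the minorization `εν ≤ P(x,·)`
makes `P(x,·) − εν` a genuine difference of measures. So integrating `P̌(·;B)` against
`λ ⊗ b_ε`, first over the Bernoulli coordinate of the starting point,
leaves `∫ (P(x,·) ⊗ b_ε)(B) dλ(x)`, which is `(λ ⊗ b_ε)(B)` by the `P`-invariance of `λ`. -/

open MeasureTheory ProbabilityTheory
open scoped ENNReal

/-- Bernoulli distribution `b_ε = (1−ε)δ_false + εδ_true` on `{0,1} ≃ Bool`. -/
noncomputable def bern (ε : ℝ) : Measure Bool :=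
  ENNReal.ofReal (1 - ε) • Measure.dirac false + ENNReal.ofReal ε • Measure.dirac true

open Classical in
/-- First marginal `Q` of the split kernel: on `C × {0}` the residual kernel
`R(x,·) = (P(x,·) − εν)/(1−ε)`, on `C × {1}` the measure `ν`, off `C` the kernel `P`. -/
noncomputable def splitQ {X : Type*} [MeasurableSpace X] (P : Kernel X X) (ν : Measure X)
    (ε : ℝ) (C : Set X) : X × Bool → Measure X := fun p =>
  if p.1 ∈ C then
    (if p.2 then ν else (ENNReal.ofReal (1 - ε))⁻¹ • (P p.1 - ENNReal.ofReal ε • ν))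
  else P p.1

/-- The split kernel `P̌(x,d;·) = Q(x,d;·) ⊗ b_ε` on `X × {0,1}`. -/
noncomputable def splitKernel {X : Type*} [MeasurableSpace X] (P : Kernel X X) (ν : Measure X)
    (ε : ℝ) (C : Set X) : X × Bool → Measure (X × Bool) := fun p =>
  (splitQ P ν ε C p).prod (bern ε)

instance isFiniteMeasure_bern (ε : ℝ) : IsFiniteMeasure (bern ε) := by
  constructor
  simp [bern, ENNReal.add_lt_top]

theorem lintegral_bern (ε : ℝ) (g : Bool → ℝ≥0∞) :
    ∫⁻ d, g d ∂bern ε = ENNReal.ofReal (1 - ε) * g false + ENNReal.ofReal ε * g true := by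
  simp [bern, lintegral_add_measure]

section Split

variable {X : Type*} [MeasurableSpace X] {P : Kernel X X} {ν : Measure X} {ε : ℝ} {C : Set X}

theorem measurable_splitQ [IsFiniteMeasure ν] (hC : MeasurableSet C)
    (hsmall : ∀ x ∈ C, ENNReal.ofReal ε • ν ≤ P x) : Measurable (splitQ P ν ε C) := by
  classical
  have := ν.smul_finite (ENNReal.ofReal_ne_top (r := ε))
  refine Measure.measurable_of_measurable_coe _ fun s hs => ?_
  have hP : Measurable fun p : X × Bool => P p.1 s := (P.measurable_coe hs).comp measurable_fst
  have h_eq : (fun p => splitQ P ν ε C p s) = fun p => if p.1 ∈ C then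
      (if p.2 then ν s else (ENNReal.ofReal (1 - ε))⁻¹ * (P p.1 s - ENNReal.ofReal ε * ν s))
      else P p.1 s := by
    ext ⟨x, d⟩
    by_cases hx : x ∈ C
    · cases d <;> simp [splitQ, hx, Measure.sub_apply hs (hsmall x hx)]
    · simp [splitQ, hx]
  rw [h_eq]
  exact Measurable.ite (hC.preimage measurable_fst)
    (Measurable.ite ((measurableSet_singleton true).preimage measurable_snd) measurable_const
      ((hP.sub measurable_const).const_mul _)) hP

theorem bern_average_splitQ [IsFiniteMeasure ν] (hε0 : 0 ≤ ε) (hε1 : ε < 1) (x : X)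
    (hsmall : x ∈ C → ENNReal.ofReal ε • ν ≤ P x) :
    ENNReal.ofReal (1 - ε) • splitQ P ν ε C (x, false) +
      ENNReal.ofReal ε • splitQ P ν ε C (x, true) = P x := by
  have := ν.smul_finite (ENNReal.ofReal_ne_top (r := ε))
  by_cases hx : x ∈ C
  · have hne : ENNReal.ofReal (1 - ε) ≠ 0 := (ENNReal.ofReal_pos.mpr (by linarith)).ne'
    simp only [splitQ, hx, if_true, Bool.false_eq_true, if_false, smul_smul,
      ENNReal.mul_inv_cancel hne ENNReal.ofReal_ne_top, one_smul]
    exact Measure.sub_add_cancel_of_le (hsmall hx)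
  · simp only [splitQ, hx, if_false, ← add_smul]
    rw [← ENNReal.ofReal_add (by linarith) hε0, sub_add_cancel, ENNReal.ofReal_one, one_smul]

theorem lintegral_bern_lintegral_splitQ [IsFiniteMeasure ν] (hε0 : 0 ≤ ε) (hε1 : ε < 1) (x : X)
    (hsmall : x ∈ C → ENNReal.ofReal ε • ν ≤ P x) (f : X → ℝ≥0∞) :
    ∫⁻ d, ∫⁻ y, f y ∂splitQ P ν ε C (x, d) ∂bern ε = ∫⁻ y, f y ∂P x := by
  rw [lintegral_bern, ← smul_eq_mul, ← smul_eq_mul, ← lintegral_smul_measure,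
    ← lintegral_smul_measure, ← lintegral_add_measure, bern_average_splitQ hε0 hε1 x hsmall]

end Split

theorem ProbabilityTheory.Kernel.Invariant.lintegral_lintegral {X : Type*} [MeasurableSpace X]
    {κ : Kernel X X} {μ : Measure X} (hκ : κ.Invariant μ) {f : X → ℝ≥0∞}
    (hf : AEMeasurable f μ) : ∫⁻ x, ∫⁻ y, f y ∂κ x ∂μ = ∫⁻ y, f y ∂μ := by
  rw [← hκ.def] at hf
  rw [← Measure.lintegral_bind κ.aemeasurable hf, hκ.def]

theorem ProbabilityTheory.Kernel.invariant_of_lintegral_eq {X : Type*} [MeasurableSpace X]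
    {κ : Kernel X X} {μ : Measure X}
    (hinv : ∀ A : Set X, MeasurableSet A → ∫⁻ x, κ x A ∂μ = μ A) : κ.Invariant μ := by
  ext A hA
  rw [Measure.bind_apply hA κ.aemeasurable, hinv A hA]

theorem stmt_17_general {X : Type*} [MeasurableSpace X] (P : Kernel X X)
    (ν : Measure X) [IsProbabilityMeasure ν] (ε : ℝ) (hε : ε ∈ Set.Ioo (0 : ℝ) 1)
    (C : Set X) (hC : MeasurableSet C)
    (hsmall : ∀ x ∈ C, ∀ A : Set X, MeasurableSet A → ENNReal.ofReal ε * ν A ≤ P x A)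
    (lam : Measure X)
    (hinv : ∀ A : Set X, MeasurableSet A → ∫⁻ x, P x A ∂lam = lam A) :
    ∀ B : Set (X × Bool), MeasurableSet B →
      ∫⁻ p, splitKernel P ν ε C p B ∂(lam.prod (bern ε)) = (lam.prod (bern ε)) B := by
  obtain ⟨hε0, hε1⟩ := hε
  have hνP : ∀ x ∈ C, ENNReal.ofReal ε • ν ≤ P x := fun x hx =>
    Measure.le_iff.mpr fun A hA => by simpa using hsmall x hx A hA
  intro B hB
  have hf : Measurable fun y => bern ε (Prod.mk y ⁻¹' B) := measurable_measure_prodMk_left hB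
  calc ∫⁻ p, splitKernel P ν ε C p B ∂(lam.prod (bern ε))
      = ∫⁻ p, ∫⁻ y, bern ε (Prod.mk y ⁻¹' B) ∂splitQ P ν ε C p ∂(lam.prod (bern ε)) := by
        simp only [splitKernel, Measure.prod_apply hB]
    _ = ∫⁻ x, ∫⁻ d, ∫⁻ y, bern ε (Prod.mk y ⁻¹' B) ∂splitQ P ν ε C (x, d) ∂bern ε ∂lam :=
        lintegral_prod _ ((Measure.measurable_lintegral hf).comp
          (measurable_splitQ hC hνP)).aemeasurable
    _ = ∫⁻ x, ∫⁻ y, bern ε (Prod.mk y ⁻¹' B) ∂P x ∂lam :=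
        lintegral_congr fun x => lintegral_bern_lintegral_splitQ hε0.le hε1 x (hνP x) _
    _ = ∫⁻ y, bern ε (Prod.mk y ⁻¹' B) ∂lam :=
        (Kernel.invariant_of_lintegral_eq hinv).lintegral_lintegral hf.aemeasurable
    _ = (lam.prod (bern ε)) B := (Measure.prod_apply hB).symm

/-- If `λ` is a `P`-invariant nonnegative (σ-finite) measure, then `λ ⊗ b_ε` is invariant
for the split kernel `P̌`. -/
theorem stmt_17 {X : Type*} [MeasurableSpace X] (P : Kernel X X) [IsMarkovKernel P]
    (ν : Measure X) [IsProbabilityMeasure ν] (ε : ℝ) (hε : ε ∈ Set.Ioo (0 : ℝ) 1)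
    (C : Set X) (hC : MeasurableSet C) (hνC : ν C = 1)
    (hsmall : ∀ x ∈ C, ∀ A : Set X, MeasurableSet A → ENNReal.ofReal ε * ν A ≤ P x A)
    (lam : Measure X) [SigmaFinite lam]
    (hinv : ∀ A : Set X, MeasurableSet A → ∫⁻ x, P x A ∂lam = lam A) :
    ∀ B : Set (X × Bool), MeasurableSet B →
      ∫⁻ p, splitKernel P ν ε C p B ∂(lam.prod (bern ε)) = (lam.prod (bern ε)) B :=
  stmt_17_general P ν ε hε C hC hsmall lam hinv
end
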